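/- arXiv:math/9801056 — 3 statements merged into one kernel-verified Lean document; each statement's English description precedes it below -/
import Mathlib

section
/- There exist real sequences (c_r)_{r≥0} and (d_r)_{r≥0} with c₀ = d₀ = 1 such that the power series y₁(x) = Σ_{r=0}^∞ c_r x^{3r} and y₂(x) = x²·Σ_{r=0}^∞ d_r x^{3r} converge for all real x and define functions that each solve the differential equation y'''(x) − x²y''(x) − xy'(x) + y(x) = 0 on ℝ. -/
/-!
Substituting `y = ∑ aₙ xⁿ` into the equation and comparing coefficients of `xⁿ` gives the
three-step recurrence `(n + 1)(n + 2)(n + 3) aₙ₊₃ = (n - 1)(n + 1) aₙ`; here one uses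
`xᵏ y⁽ᵏ⁾ = ∑ n(n - 1)⋯(n - k + 1) aₙ xⁿ` for `k = 1, 2`. The initial data `(1, 0, 0)` and
`(0, 0, 1)` give coefficients supported on the residue classes `0` and `2` mod `3`, and since the
ratio `aₙ₊₃ / aₙ` is at most `1 / (n + 3)` in absolute value, `|a₃ᵣ₊ᵢ| ≤ 1 / r!`. So both series
converge absolutely on all of `ℝ` and can be differentiated term by term.
-/

open Nat
open scoped ContDiff

noncomputable section

def EntireCoeffs (a : ℕ → ℝ) : Prop :=
  ∀ x : ℝ, Summable fun n => ‖a n * x ^ n‖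

def seriesSum (a : ℕ → ℝ) (x : ℝ) : ℝ :=
  ∑' n, a n * x ^ n

def derivCoeffs (a : ℕ → ℝ) (n : ℕ) : ℝ :=
  (n + 1) * a (n + 1)

lemma iterate_derivCoeffs_apply (a : ℕ → ℝ) (k n : ℕ) :
    derivCoeffs^[k] a n = ((n + k).descFactorial k : ℝ) * a (n + k) := by
  induction k generalizing a with
  | zero => simp
  | succ k ih =>
    rw [Function.iterate_succ_apply, ih, derivCoeffs, ← add_assoc, succ_descFactorial_succ]
    push_cast
    ring

lemma entireCoeffs_derivCoeffs {a : ℕ → ℝ} (ha : EntireCoeffs a) :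
    EntireCoeffs (derivCoeffs a) := by
  intro x
  set s := 2 * (|x| + 1)
  refine .of_nonneg_of_le (fun _ => norm_nonneg _) (fun n => ?_)
    ((summable_nat_add_iff 1).2 (ha s))
  have h2 : ((n : ℝ) + 1) ≤ 2 ^ (n + 1) := by
    exact_mod_cast (Nat.lt_two_pow_self (n := n + 1)).le
  have hx : |x| ^ n ≤ (|x| + 1) ^ (n + 1) :=
    (pow_le_pow_left₀ (abs_nonneg x) (by linarith) n).trans
      (pow_le_pow_right₀ (by linarith [abs_nonneg x]) n.le_succ)
  simp only [derivCoeffs, norm_mul, norm_pow, Real.norm_eq_abs,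
    abs_of_nonneg (by positivity : (0 : ℝ) ≤ n + 1), abs_of_nonneg (by positivity : (0 : ℝ) ≤ s)]
  calc (↑n + 1) * |a (n + 1)| * |x| ^ n = |a (n + 1)| * ((↑n + 1) * |x| ^ n) := by ring
    _ ≤ |a (n + 1)| * (2 ^ (n + 1) * (|x| + 1) ^ (n + 1)) := by gcongr
    _ = |a (n + 1)| * s ^ (n + 1) := by rw [mul_pow]

lemma entireCoeffs_iterate_derivCoeffs {a : ℕ → ℝ} (ha : EntireCoeffs a) (k : ℕ) :
    EntireCoeffs (derivCoeffs^[k] a) := by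
  induction k with
  | zero => exact ha
  | succ k ih => rw [Function.iterate_succ_apply']; exact entireCoeffs_derivCoeffs ih

namespace EntireCoeffs

variable {a : ℕ → ℝ}

lemma hasSum (ha : EntireCoeffs a) (x : ℝ) : HasSum (fun n => a n * x ^ n) (seriesSum a x) :=
  (ha x).of_norm.hasSum

lemma hasDerivAt (ha : EntireCoeffs a) (x : ℝ) :
    HasDerivAt (seriesSum a) (seriesSum (derivCoeffs a) x) x := by
  have hshift (y : ℝ) (n : ℕ) :
      a (n + 1) * ((n + 1 : ℕ) * y ^ (n + 1 - 1)) = derivCoeffs a n * y ^ n := by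
    simp only [derivCoeffs, add_tsub_cancel_right, cast_add, cast_one]
    ring
  set R := |x| + 1
  have hx : x ∈ Metric.ball (0 : ℝ) R := by simp [R]
  have hu : Summable fun n => ‖a n * (n * R ^ (n - 1))‖ :=
    (summable_nat_add_iff 1).1 <| by simpa only [hshift] using entireCoeffs_derivCoeffs ha R
  have hsum : HasSum (fun n => a n * (n * x ^ (n - 1))) (seriesSum (derivCoeffs a) x) :=
    (hasSum_nat_add_iff' 1).1 <| by
      simpa only [hshift, Finset.sum_range_one, cast_zero, zero_mul, mul_zero, sub_zero]
        using (entireCoeffs_derivCoeffs ha).hasSum x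
  rw [← hsum.tsum_eq]
  refine hasDerivAt_tsum_of_isPreconnected hu Metric.isOpen_ball
    (convex_ball (0 : ℝ) R).isPreconnected (g := fun n y => a n * y ^ n)
    (fun n y _ => (hasDerivAt_pow n y).const_mul (a n)) (fun n y hy => ?_) hx (ha x).of_norm hx
  have hyR : |y| ≤ R := by simpa using (Metric.mem_ball.1 hy).le
  have hR : |R| = R := abs_of_pos (by positivity)
  simp only [norm_mul, norm_pow, Real.norm_eq_abs, hR]
  gcongr

lemma deriv_seriesSum (ha : EntireCoeffs a) : deriv (seriesSum a) = seriesSum (derivCoeffs a) :=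
  funext fun x => (ha.hasDerivAt x).deriv

lemma iteratedDeriv_seriesSum (ha : EntireCoeffs a) (k : ℕ) :
    iteratedDeriv k (seriesSum a) = seriesSum (derivCoeffs^[k] a) := by
  induction k generalizing a with
  | zero => simp
  | succ k ih => rw [iteratedDeriv_succ', ha.deriv_seriesSum, ih (entireCoeffs_derivCoeffs ha),
      Function.iterate_succ_apply]

lemma contDiff_seriesSum (ha : EntireCoeffs a) : ContDiff ℝ ∞ (seriesSum a) :=
  contDiff_of_differentiable_iteratedDeriv fun k _ => by
    rw [ha.iteratedDeriv_seriesSum]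
    exact fun x => ((entireCoeffs_iterate_derivCoeffs ha k).hasDerivAt x).differentiableAt

lemma hasSum_pow_mul_iteratedDeriv (ha : EntireCoeffs a) (k : ℕ) (x : ℝ) :
    HasSum (fun n => (n.descFactorial k : ℝ) * a n * x ^ n)
      (x ^ k * iteratedDeriv k (seriesSum a) x) := by
  have hlow : ∑ i ∈ Finset.range k, (i.descFactorial k : ℝ) * a i * x ^ i = 0 :=
    Finset.sum_eq_zero fun i hi => by
      simp [descFactorial_eq_zero_iff_lt.2 (Finset.mem_range.1 hi)]
  rw [← hasSum_nat_add_iff' k, hlow, sub_zero, ha.iteratedDeriv_seriesSum]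
  have hterm (n : ℕ) : ((n + k).descFactorial k : ℝ) * a (n + k) * x ^ (n + k)
      = x ^ k * (derivCoeffs^[k] a n * x ^ n) := by
    rw [iterate_derivCoeffs_apply]
    ring
  simpa only [hterm] using ((entireCoeffs_iterate_derivCoeffs ha k).hasSum x).mul_left (x ^ k)

lemma seriesSum_ode (ha : EntireCoeffs a)
    (hrec : ∀ n : ℕ, a (n + 3) = ((n : ℝ) - 1) / ((n + 2) * (n + 3)) * a n) (x : ℝ) :
    iteratedDeriv 3 (seriesSum a) x - x ^ 2 * iteratedDeriv 2 (seriesSum a) x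
      - x * deriv (seriesSum a) x + seriesSum a x = 0 := by
  have h3 : HasSum (fun n => derivCoeffs^[3] a n * x ^ n) (iteratedDeriv 3 (seriesSum a) x) := by
    rw [ha.iteratedDeriv_seriesSum]
    exact (entireCoeffs_iterate_derivCoeffs ha 3).hasSum x
  have h1 := ha.hasSum_pow_mul_iteratedDeriv 1 x
  rw [pow_one, iteratedDeriv_one] at h1
  refine (((h3.sub (ha.hasSum_pow_mul_iteratedDeriv 2 x)).sub h1).add (ha.hasSum x)).unique ?_
  convert hasSum_zero with n
  rw [iterate_derivCoeffs_apply, hrec, cast_descFactorial_two, descFactorial_one]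
  simp only [succ_descFactorial_succ, descFactorial_zero]
  push_cast
  field_simp
  ring

end EntireCoeffs

lemma summable_of_summable_mul_add {R : Type*} [AddCommGroup R] [TopologicalSpace R]
    [IsTopologicalAddGroup R] {f : ℕ → R} (m : ℕ) [NeZero m]
    (h : ∀ j < m, Summable fun n => f (m * n + j)) : Summable f := by
  rw [Finset.sum_indicator_mod m f]
  refine (summable_sum fun k _ => ?_).congr fun n => (Finset.sum_apply n _ _).symm
  rw [← ZMod.natCast_zmod_val k, summable_indicator_mod_iff_summable]
  exact h k.val (ZMod.val_lt k)

lemma summable_norm_mul_pow_of_abs_le {c : ℕ → ℝ} {C : ℝ} (hc : ∀ r, |c r| ≤ C / r !) (y : ℝ) :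
    Summable fun r => ‖c r * y ^ r‖ := by
  refine .of_nonneg_of_le (fun _ => norm_nonneg _) (fun r => ?_)
    ((Real.summable_pow_div_factorial |y|).mul_left C)
  rw [norm_mul, norm_pow, Real.norm_eq_abs, Real.norm_eq_abs]
  calc |c r| * |y| ^ r ≤ C / r ! * |y| ^ r := by gcongr; exact hc r
    _ = C * (|y| ^ r / r !) := by ring

lemma seriesSum_eq_of_mod {a : ℕ → ℝ} {m j : ℕ} (hm : 0 < m) (ha : ∀ n, n % m ≠ j → a n = 0)
    (x : ℝ) : seriesSum a x = x ^ j * ∑' r, a (m * r + j) * x ^ (m * r) := by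
  have hinj : Function.Injective fun r => m * r + j := fun r s h => by
    simpa [hm.ne'] using h
  have hsupp : Function.support (fun n => a n * x ^ n) ⊆ Set.range fun r => m * r + j := by
    intro n hn
    have hmod : n % m = j := by_contra fun h => hn (by simp [ha n h])
    exact ⟨n / m, hmod ▸ Nat.div_add_mod n m⟩
  rw [seriesSum, ← hinj.tsum_eq hsupp, ← tsum_mul_left]
  congr 1 with r
  ring

def odeCoeff (a₀ a₁ a₂ : ℝ) : ℕ → ℝ
  | 0 => a₀
  | 1 => a₁
  | 2 => a₂
  | n + 3 => ((n : ℝ) - 1) / ((n + 2) * (n + 3)) * odeCoeff a₀ a₁ a₂ n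

section odeCoeff

variable {a₀ a₁ a₂ : ℝ}

lemma odeCoeff_three_mul_add_eq_zero {i : ℕ} (hi : odeCoeff a₀ a₁ a₂ i = 0) (r : ℕ) :
    odeCoeff a₀ a₁ a₂ (3 * r + i) = 0 := by
  induction r with
  | zero => simpa
  | succ r ih => rw [show 3 * (r + 1) + i = 3 * r + i + 3 by ring, odeCoeff, ih, mul_zero]

lemma odeCoeff_eq_zero_of_mod {n : ℕ} (h : odeCoeff a₀ a₁ a₂ (n % 3) = 0) :
    odeCoeff a₀ a₁ a₂ n = 0 := by
  rw [← Nat.div_add_mod n 3]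
  exact odeCoeff_three_mul_add_eq_zero h _

lemma abs_odeCoeff_le {M : ℝ} (h₀ : |a₀| ≤ M) (h₁ : |a₁| ≤ M) (h₂ : |a₂| ≤ M) {i : ℕ} (hi : i < 3)
    (r : ℕ) : |odeCoeff a₀ a₁ a₂ (3 * r + i)| ≤ M / r ! := by
  induction r with
  | zero => interval_cases i <;> simpa [odeCoeff]
  | succ r ih =>
    have hratio : |((3 * r + i : ℕ) - 1 : ℝ) / (((3 * r + i : ℕ) + 2) * ((3 * r + i : ℕ) + 3))|
        ≤ 1 / (r + 1) := by
      push_cast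
      rw [abs_div, abs_of_pos (show (0 : ℝ) < (3 * r + i + 2) * (3 * r + i + 3) by positivity),
        div_le_div_iff₀ (by positivity) (by positivity), one_mul]
      exact mul_le_mul (abs_le.2 ⟨by linarith, by linarith⟩) (by linarith) (by positivity)
        (by positivity)
    rw [show 3 * (r + 1) + i = 3 * r + i + 3 by ring, odeCoeff, abs_mul]
    calc _ ≤ 1 / (r + 1) * (M / r !) := mul_le_mul hratio ih (abs_nonneg _) (by positivity)
      _ = M / (r + 1)! := by
        rw [factorial_succ]
        push_cast
        field_simp

lemma entireCoeffs_odeCoeff : EntireCoeffs (odeCoeff a₀ a₁ a₂) := by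
  intro x
  refine summable_of_summable_mul_add 3 fun i hi => ?_
  have hterm (r : ℕ) : ‖odeCoeff a₀ a₁ a₂ (3 * r + i) * x ^ (3 * r + i)‖
      = |x| ^ i * ‖odeCoeff a₀ a₁ a₂ (3 * r + i) * (x ^ 3) ^ r‖ := by
    simp only [norm_mul, norm_pow, Real.norm_eq_abs, pow_add, pow_mul]
    ring
  simpa only [hterm] using (summable_norm_mul_pow_of_abs_le (abs_odeCoeff_le
    (le_max_left _ _) ((le_max_left _ _).trans (le_max_right _ _))
    ((le_max_right _ _).trans (le_max_right _ _)) hi) (x ^ 3)).mul_left (|x| ^ i)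

end odeCoeff

/-- There exist two entire power-series solutions `y₁ = Σ c_r x^{3r}` and
`y₂ = x² Σ d_r x^{3r}` (with `c₀ = d₀ = 1`) of `y''' − x²y'' − xy' + y = 0` on `ℝ`. -/
theorem exists_entire_series_solutions :
    ∃ (c d : ℕ → ℝ) (y₁ y₂ : ℝ → ℝ),
      c 0 = 1 ∧ d 0 = 1 ∧
      (∀ x : ℝ, Summable fun r : ℕ => c r * x ^ (3 * r)) ∧
      (∀ x : ℝ, Summable fun r : ℕ => d r * x ^ (3 * r)) ∧
      (∀ x : ℝ, y₁ x = ∑' r : ℕ, c r * x ^ (3 * r)) ∧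
      (∀ x : ℝ, y₂ x = x ^ 2 * ∑' r : ℕ, d r * x ^ (3 * r)) ∧
      ContDiff ℝ 3 y₁ ∧ ContDiff ℝ 3 y₂ ∧
      (∀ x : ℝ,
        iteratedDeriv 3 y₁ x - x ^ 2 * iteratedDeriv 2 y₁ x - x * deriv y₁ x + y₁ x = 0) ∧
      (∀ x : ℝ,
        iteratedDeriv 3 y₂ x - x ^ 2 * iteratedDeriv 2 y₂ x - x * deriv y₂ x + y₂ x = 0) := by
  have hsupp₁ (n : ℕ) (hn : n % 3 ≠ 0) : odeCoeff 1 0 0 n = 0 := odeCoeff_eq_zero_of_mod <| by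
    rcases (by omega : n % 3 = 1 ∨ n % 3 = 2) with h | h <;> simp [h, odeCoeff]
  have hsupp₂ (n : ℕ) (hn : n % 3 ≠ 2) : odeCoeff 0 0 1 n = 0 := odeCoeff_eq_zero_of_mod <| by
    rcases (by omega : n % 3 = 0 ∨ n % 3 = 1) with h | h <;> simp [h, odeCoeff]
  have hbound₁ := abs_odeCoeff_le (a₀ := 1) (a₁ := 0) (a₂ := 0) (M := 1)
    (by simp) (by simp) (by simp) (i := 0) (by norm_num)
  have hbound₂ := abs_odeCoeff_le (a₀ := 0) (a₁ := 0) (a₂ := 1) (M := 1)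
    (by simp) (by simp) (by simp) (i := 2) (by norm_num)
  refine ⟨fun r => odeCoeff 1 0 0 (3 * r), fun r => odeCoeff 0 0 1 (3 * r + 2),
    seriesSum (odeCoeff 1 0 0), seriesSum (odeCoeff 0 0 1), rfl, rfl,
    fun x => ?_, fun x => ?_, fun x => ?_, seriesSum_eq_of_mod three_pos hsupp₂,
    contDiff_infty.1 entireCoeffs_odeCoeff.contDiff_seriesSum 3,
    contDiff_infty.1 entireCoeffs_odeCoeff.contDiff_seriesSum 3,
    entireCoeffs_odeCoeff.seriesSum_ode fun _ => rfl,
    entireCoeffs_odeCoeff.seriesSum_ode fun _ => rfl⟩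
  · simpa only [pow_mul, add_zero] using
      (summable_norm_mul_pow_of_abs_le hbound₁ (x ^ 3)).of_norm
  · simpa only [pow_mul] using (summable_norm_mul_pow_of_abs_le hbound₂ (x ^ 3)).of_norm
  · simpa using seriesSum_eq_of_mod three_pos hsupp₁ x
end
end

section
/- There exists a three-times continuously differentiable function y : ℝ → ℝ solving y'''(x) − x²y''(x) − xy'(x) + y(x) = 0 on ℝ such that x³·exp(−x³/3)·y(x) → 1 as x → +∞ (i.e. y(x) ~ x^{−3}·exp(x³/3) at infinity). -/
open Filter Asymptotics

/-! With `u = x y' − y` one has `u' = x y''`, and the equation becomes `(u'/x)' = x u' + u`,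
which `u = E = exp(x³/3)` solves. This gives the explicit solution `y = x F − E` with
`F = ∫₀ˣ t E`, so that `y' = F` and `y'' = x E`. Two integrations by parts show that
`F − E/x − E/x⁴` has derivative `4E/x⁵`, negligible against the derivative of `E/x⁴ → ∞`;
comparing derivatives gives `F = E/x + E/x⁴ + o(E/x⁴)`, i.e. `y = E/x³ + o(E/x³)`. -/

theorem Asymptotics.IsLittleO.of_deriv_atTop {E : Type*} [NormedAddCommGroup E] [NormedSpace ℝ E]
    {f f' : ℝ → E} {g g' : ℝ → ℝ} (h : f' =o[atTop] g')
    (hf : ∀ᶠ x in atTop, HasDerivAt f (f' x) x) (hg : ∀ᶠ x in atTop, HasDerivAt g (g' x) x)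
    (hg' : ∀ᶠ x in atTop, 0 ≤ g' x) (hg_top : Tendsto g atTop atTop) :
    f =o[atTop] g := by
  rw [isLittleO_iff]
  intro ε hε
  obtain ⟨a, ha⟩ := eventually_atTop.1 (hf.and (hg.and (hg'.and (h.def (half_pos hε)))))
  have hcont : ∀ x ≥ a, ContinuousAt f x ∧ ContinuousAt g x := fun x hx =>
    ⟨(ha x hx).1.continuousAt, (ha x hx).2.1.continuousAt⟩
  have increment : ∀ x ≥ a, ‖f x - f a‖ ≤ ε / 2 * (g x - g a) := by
    intro x hx
    refine image_norm_le_of_norm_deriv_right_le_deriv_boundary' (f := fun t => f t - f a) (f' := f')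
      (B := fun t => ε / 2 * (g t - g a)) (B' := fun t => ε / 2 * g' t)
      (fun t ht => ((hcont t ht.1).1.sub continuousAt_const).continuousWithinAt) (fun t ht => ?_)
      (by simp) (fun t ht => (((hcont t ht.1).2.sub continuousAt_const).const_mul
        _).continuousWithinAt) (fun t ht => ?_) (fun t ht => ?_) ⟨hx, le_rfl⟩
    · exact ((ha t ht.1).1.sub_const _).hasDerivWithinAt
    · exact (((ha t ht.1).2.1.sub_const _).const_mul _).hasDerivWithinAt
    · simpa [abs_of_nonneg (ha t ht.1).2.2.1] using (ha t ht.1).2.2.2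
  -- `g → ∞` absorbs the initial value `f a` into the other `ε / 2`
  filter_upwards [eventually_ge_atTop a, hg_top.eventually_ge_atTop 0,
    hg_top.eventually_ge_atTop (2 * ‖f a‖ / ε - g a)] with x hxa hgx hgx'
  have hfx : ‖f x‖ ≤ ‖f a‖ + ε / 2 * (g x - g a) := by
    calc ‖f x‖ ≤ ‖f a‖ + ‖f x - f a‖ := norm_le_norm_add_norm_sub' _ _
      _ ≤ _ := by gcongr; exact increment x hxa
  rw [Real.norm_of_nonneg hgx]
  have : 2 * ‖f a‖ ≤ ε * (g x + g a) := by
    rw [div_sub' hε.ne', div_le_iff₀ hε] at hgx'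
    linarith
  nlinarith

open scoped ContDiff

namespace DominantSolution

noncomputable def expCube (x : ℝ) : ℝ := Real.exp (x ^ 3 / 3)

noncomputable def expCubePrimitive (x : ℝ) : ℝ := ∫ t in (0 : ℝ)..x, t * expCube t

noncomputable def sol (x : ℝ) : ℝ := x * expCubePrimitive x - expCube x

lemma expCube_pos (x : ℝ) : 0 < expCube x := Real.exp_pos _

lemma contDiff_expCube : ContDiff ℝ ∞ expCube := by
  unfold expCube; fun_prop

lemma hasDerivAt_expCube (x : ℝ) : HasDerivAt expCube (x ^ 2 * expCube x) x := by
  refine ((hasDerivAt_pow 3 x).div_const 3).exp.congr_deriv ?_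
  unfold expCube; norm_num; ring

lemma hasDerivAt_expCubePrimitive (x : ℝ) :
    HasDerivAt expCubePrimitive (x * expCube x) x :=
  have hcont : Continuous fun t => t * expCube t := continuous_id.mul contDiff_expCube.continuous
  intervalIntegral.integral_hasDerivAt_right (hcont.intervalIntegrable _ _)
    (hcont.stronglyMeasurableAtFilter _ _) hcont.continuousAt

lemma contDiff_expCubePrimitive : ContDiff ℝ ∞ expCubePrimitive :=
  contDiff_infty_iff_deriv.2
    ⟨fun x => (hasDerivAt_expCubePrimitive x).differentiableAt, by
      rw [funext fun x => (hasDerivAt_expCubePrimitive x).deriv]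
      exact contDiff_id.mul contDiff_expCube⟩

lemma deriv_sol : deriv sol = expCubePrimitive := by
  refine funext fun x => HasDerivAt.deriv ?_
  refine (((hasDerivAt_id x).mul (hasDerivAt_expCubePrimitive x)).sub
    (hasDerivAt_expCube x)).congr_deriv ?_
  simp only [id_eq, one_mul]; ring

lemma iteratedDeriv_two_sol : iteratedDeriv 2 sol = fun x => x * expCube x := by
  rw [iteratedDeriv_succ, iteratedDeriv_one, deriv_sol]
  exact funext fun x => (hasDerivAt_expCubePrimitive x).deriv

lemma iteratedDeriv_three_sol (x : ℝ) :
    iteratedDeriv 3 sol x = expCube x + x ^ 3 * expCube x := by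
  rw [iteratedDeriv_succ, iteratedDeriv_two_sol]
  refine (((hasDerivAt_id x).mul (hasDerivAt_expCube x)).congr_deriv ?_).deriv
  simp only [id_eq, one_mul]; ring

lemma sol_ode (x : ℝ) :
    iteratedDeriv 3 sol x - x ^ 2 * iteratedDeriv 2 sol x - x * deriv sol x + sol x = 0 := by
  rw [iteratedDeriv_three_sol, iteratedDeriv_two_sol, deriv_sol, sol]
  ring

lemma contDiff_sol : ContDiff ℝ ∞ sol :=
  (contDiff_id.mul contDiff_expCubePrimitive).sub contDiff_expCube

lemma hasDerivAt_expCube_div_pow (n : ℕ) {x : ℝ} (hx : x ≠ 0) :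
    HasDerivAt (fun t => expCube t / t ^ n)
      (x ^ 2 * expCube x / x ^ n - n * expCube x / x ^ (n + 1)) x := by
  refine ((hasDerivAt_expCube x).fun_div (hasDerivAt_pow n x) (pow_ne_zero n hx)).congr_deriv ?_
  rcases n with _ | n
  · simp
  · simp only [Nat.add_sub_cancel]; field_simp; push_cast; ring

lemma hasDerivAt_expCubePrimitive_sub {x : ℝ} (hx : x ≠ 0) :
    HasDerivAt (fun t => expCubePrimitive t - expCube t / t - expCube t / t ^ 4)
      (4 * expCube x / x ^ 5) x := by
  have h1 := hasDerivAt_expCube_div_pow 1 hx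
  have h4 := hasDerivAt_expCube_div_pow 4 hx
  simp only [pow_one] at h1
  refine (((hasDerivAt_expCubePrimitive x).sub h1).sub h4).congr_deriv ?_
  field_simp; ring

lemma tendsto_expCube_div_pow_four : Tendsto (fun x => expCube x / x ^ 4) atTop atTop := by
  refine tendsto_atTop_mono' _ ?_ ((tendsto_pow_atTop two_ne_zero).atTop_div_const
    (by norm_num : (0 : ℝ) < 18))
  filter_upwards [eventually_gt_atTop 0] with x hx
  have : x ^ 6 / 18 ≤ expCube x := by
    have := Real.quadratic_le_exp_of_nonneg (by positivity : 0 ≤ x ^ 3 / 3)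
    unfold expCube; nlinarith [pow_pos hx 3]
  rw [le_div_iff₀ (by positivity)]
  nlinarith

lemma hasDerivAt_expCube_div_pow_four {x : ℝ} (hx : x ≠ 0) :
    HasDerivAt (fun t => expCube t / t ^ 4) (expCube x * (x ^ 3 - 4) / x ^ 5) x :=
  (hasDerivAt_expCube_div_pow 4 hx).congr_deriv (by field_simp; ring)

lemma isLittleO_deriv_expCubePrimitive_sub :
    (fun x => 4 * expCube x / x ^ 5) =o[atTop] fun x => expCube x * (x ^ 3 - 4) / x ^ 5 := by
  have hpos : ∀ x ≥ 2, 0 < expCube x * (x ^ 3 - 4) / x ^ 5 := fun x hx =>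
    div_pos (mul_pos (expCube_pos x) (by nlinarith [sq_nonneg x])) (by positivity)
  rw [isLittleO_iff_tendsto' (by
    filter_upwards [eventually_ge_atTop 2] with x hx h0
    exact absurd h0 (hpos x hx).ne')]
  have hden : Tendsto (fun x : ℝ => x ^ 3 - 4) atTop atTop := by
    simpa only [sub_eq_add_neg] using
      tendsto_atTop_add_const_right _ (-4 : ℝ) (tendsto_pow_atTop three_ne_zero)
  refine ((tendsto_const_nhds (x := (4 : ℝ))).div_atTop hden).congr' ?_
  filter_upwards [eventually_ge_atTop 2] with x hx
  have : x ^ 3 - 4 ≠ 0 := by nlinarith [sq_nonneg x]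
  have := (expCube_pos x).ne'
  field_simp

lemma isLittleO_expCubePrimitive_sub :
    (fun x => expCubePrimitive x - expCube x / x - expCube x / x ^ 4)
      =o[atTop] fun x => expCube x / x ^ 4 := by
  refine isLittleO_deriv_expCubePrimitive_sub.of_deriv_atTop ?_ ?_ ?_ tendsto_expCube_div_pow_four
  · filter_upwards [eventually_ne_atTop 0] with x hx
    exact hasDerivAt_expCubePrimitive_sub hx
  · filter_upwards [eventually_ne_atTop 0] with x hx
    exact hasDerivAt_expCube_div_pow_four hx
  · filter_upwards [eventually_ge_atTop 2] with x hx
    have : 8 ≤ x ^ 3 := by nlinarith [sq_nonneg x]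
    exact div_nonneg (mul_nonneg (expCube_pos x).le (by linarith)) (by positivity)

lemma tendsto_sol :
    Tendsto (fun x : ℝ => x ^ 3 * Real.exp (-x ^ 3 / 3) * sol x) atTop (nhds 1) := by
  have hlim := tendsto_const_nhds (x := (1 : ℝ)).add
    isLittleO_expCubePrimitive_sub.tendsto_div_nhds_zero
  rw [add_zero] at hlim
  refine hlim.congr' ?_
  filter_upwards [eventually_ne_atTop 0] with x hx
  have hE := (expCube_pos x).ne'
  rw [neg_div, Real.exp_neg, ← expCube, sol]
  field_simp
  ring

end DominantSolution

open DominantSolution in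
/-- There is a solution of `y''' − x²y'' − xy' + y = 0` on `ℝ` with
`y(x) ~ x⁻³·exp(x³/3)` as `x → +∞`. -/
theorem exists_dominant_solution :
    ∃ y : ℝ → ℝ, ContDiff ℝ 3 y ∧
      (∀ x : ℝ,
        iteratedDeriv 3 y x - x ^ 2 * iteratedDeriv 2 y x - x * deriv y x + y x = 0) ∧
      Tendsto (fun x : ℝ => x ^ 3 * Real.exp (-x ^ 3 / 3) * y x) atTop (nhds 1) :=
  ⟨sol, contDiff_infty.1 contDiff_sol 3, sol_ode, tendsto_sol⟩
end

section
/- There exists a three-times continuously differentiable function y : ℝ → ℝ solving y'''(x) − x²y''(x) − xy'(x) + y(x) = 0 on ℝ such that x·y(x) → 1 as x → +∞ (i.e. y(x) ~ x^{−1} at infinity) and y(0) = 2·3^{−1/3}·Γ(2/3), where Γ denotes the real Gamma function. -/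
/-!
The equation is `(y'' - x²y' + xy)' = 0`, and `y = x` solves `y'' - x²y' + xy = 0`; reduction of
order produces a solution of `y'' - x²y' + xy = 2` regular at `0`. Concretely, with
`F(x) = ∫ₓ^∞ t e^{-t³/3} dt` (`cubeTail`) and `R = e^{x³/3} F` (`scaledTail`), which solves
`R' = x²R - x`, take `y = 2R + 2xH` where `H(x) = ∫ₓ^∞ (tR(t) - 1) dt` (`defectTail`); then
`y' = 2H` and `y'' = 2 - 2xR`.

For the asymptotics, if `p' ≥ x²p - x` on `[a, ∞)` and `p` has a limit, then
`e^{-x³/3}(R - p)` is antitone and tends to `0`, so `p ≤ R`; symmetrically for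
`p' ≤ x²p - x`. Applied to the truncations `1/x - 1/x⁴` and `1/x - 1/x⁴ + 4/x⁷` of the
asymptotic series of `R`, this gives `xR - 1 = -x⁻³ + O(x⁻⁶)`, hence `x²H → -1/2` and
`xy = 2xR + 2x²H → 1`. Finally `y(0) = 2F(0)`, a Gamma integral.
-/

open Real Set Filter Topology MeasureTheory
open scoped ContDiff

section

variable {E : Type*} [NormedAddCommGroup E]

theorem hasDerivAt_integral_Ioi [NormedSpace ℝ E] [CompleteSpace E] {f : ℝ → E}
    (hf : Continuous f) (hint : ∀ a, IntegrableOn f (Ioi a)) (x : ℝ) :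
    HasDerivAt (fun u => ∫ t in Ioi u, f t) (-f x) x := by
  have hsplit : (fun u => ∫ t in Ioi u, f t) =
      fun u => (∫ t in Ioi 0, f t) - ∫ t in (0 : ℝ)..u, f t := by
    funext u
    rw [← intervalIntegral.integral_interval_add_Ioi (hint 0) (hint u), add_sub_cancel_left]
  rw [hsplit]
  exact (hf.integral_hasStrictDerivAt 0 x).hasDerivAt.const_sub _

theorem integrableOn_Ioi_of_norm_le {f : ℝ → E} {g : ℝ → ℝ} {b : ℝ} (hf : Continuous f)
    (hg : IntegrableOn g (Ioi b)) (hfg : ∀ t ∈ Ioi b, ‖f t‖ ≤ g t) (a : ℝ) :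
    IntegrableOn f (Ioi a) :=
  (hf.integrableOn_Ioc.union (hg.mono' hf.aestronglyMeasurable.restrict
    (ae_restrict_of_forall_mem measurableSet_Ioi hfg))).mono_set Ioi_subset_Ioc_union_Ioi

theorem contDiff_infty_of_hasDerivAt [NormedSpace ℝ E] {f g : ℝ → E}
    (hf : ∀ x, HasDerivAt f (g x) x) (hg : ∀ n : ℕ, ContDiff ℝ n f → ContDiff ℝ n g) :
    ContDiff ℝ ∞ f := by
  refine contDiff_infty.2 fun n => ?_
  induction n with
  | zero => exact contDiff_zero.2 (continuous_iff_continuousAt.2 fun x => (hf x).continuousAt)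
  | succ n ih =>
    rw [Nat.cast_succ, contDiff_succ_iff_deriv]
    refine ⟨fun x => (hf x).differentiableAt, by simp, ?_⟩
    rw [show deriv f = g from funext fun x => (hf x).deriv]
    exact hg n ih

end

theorem nonneg_of_hasDerivAt_nonpos_of_tendsto_zero {φ φ' : ℝ → ℝ} {a : ℝ}
    (hφ : ∀ x ∈ Ici a, HasDerivAt φ (φ' x) x) (hφ' : ∀ x ∈ Ici a, φ' x ≤ 0)
    (hlim : Tendsto φ atTop (𝓝 0)) : 0 ≤ φ a := by
  have hanti : AntitoneOn φ (Ici a) :=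
    antitoneOn_of_hasDerivWithinAt_nonpos (convex_Ici a)
      (fun x hx => (hφ x hx).continuousAt.continuousWithinAt)
      (fun x hx => (hφ x (interior_subset hx)).hasDerivWithinAt)
      (fun x hx => hφ' x (interior_subset hx))
  exact le_of_tendsto hlim ((eventually_ge_atTop a).mono fun x hx => hanti self_mem_Ici hx hx)

theorem hasDerivAt_const_div_pow (c : ℝ) (k : ℕ) {x : ℝ} (hx : x ≠ 0) :
    HasDerivAt (fun u : ℝ => c / u ^ k) (-(c * k) / x ^ (k + 1)) x := by
  refine ((hasDerivAt_const x c).div (hasDerivAt_pow k x) (pow_ne_zero k hx)).congr_deriv ?_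
  rcases k with _ | k
  · simp
  · rw [Nat.add_sub_cancel]
    field_simp
    ring

theorem tendsto_const_div_pow_atTop (c : ℝ) {k : ℕ} (hk : k ≠ 0) :
    Tendsto (fun x : ℝ => c / x ^ k) atTop (𝓝 0) :=
  tendsto_const_nhds.div_atTop (tendsto_pow_atTop hk)

namespace SubdominantSolution

noncomputable def expNegCube (t : ℝ) : ℝ := exp (-(t ^ 3 / 3))

theorem expNegCube_pos (t : ℝ) : 0 < expNegCube t := exp_pos _

theorem continuous_expNegCube : Continuous expNegCube := by
  unfold expNegCube; fun_prop

theorem hasDerivAt_expNegCube (x : ℝ) : HasDerivAt expNegCube (-x ^ 2 * expNegCube x) x := by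
  unfold expNegCube
  refine ((hasDerivAt_pow 3 x).div_const 3).neg.exp.congr_deriv ?_
  norm_num
  ring

theorem tendsto_expNegCube_atTop : Tendsto expNegCube atTop (𝓝 0) :=
  tendsto_exp_atBot.comp <| tendsto_neg_atTop_atBot.comp <|
    (tendsto_pow_atTop three_ne_zero).atTop_div_const three_pos

theorem exp_mul_expNegCube (x : ℝ) : exp (x ^ 3 / 3) * expNegCube x = 1 := by
  rw [expNegCube, ← exp_add, add_neg_cancel, exp_zero]

theorem integrableOn_sq_mul_expNegCube (a : ℝ) :
    IntegrableOn (fun t => t ^ 2 * expNegCube t) (Ioi a) :=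
  integrableOn_Ioi_deriv_of_nonneg' (g := fun t => -expNegCube t)
    (fun x _ => (hasDerivAt_expNegCube x).neg.congr_deriv (by ring))
    (fun x _ => mul_nonneg (sq_nonneg x) (expNegCube_pos x).le) tendsto_expNegCube_atTop.neg

theorem integrableOn_mul_expNegCube (a : ℝ) :
    IntegrableOn (fun t => t * expNegCube t) (Ioi a) := by
  refine integrableOn_Ioi_of_norm_le (continuous_id.mul continuous_expNegCube)
    (integrableOn_sq_mul_expNegCube 1) (fun t ht => ?_) a
  have ht : 1 < t := ht
  show ‖t * expNegCube t‖ ≤ _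
  rw [norm_mul, Real.norm_of_nonneg (expNegCube_pos t).le, Real.norm_of_nonneg (by linarith)]
  exact mul_le_mul_of_nonneg_right (by nlinarith) (expNegCube_pos t).le

noncomputable def cubeTail (x : ℝ) : ℝ := ∫ t in Ioi x, t * expNegCube t

theorem hasDerivAt_cubeTail (x : ℝ) : HasDerivAt cubeTail (-(x * expNegCube x)) x :=
  hasDerivAt_integral_Ioi (continuous_id.mul continuous_expNegCube) integrableOn_mul_expNegCube x

theorem cubeTail_zero : cubeTail 0 = (3 : ℝ) ^ (-(1 / 3) : ℝ) * Gamma (2 / 3) := by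
  have hcongr : ∀ t ∈ Ioi (0 : ℝ),
      t * expNegCube t = t ^ (1 : ℝ) * exp (-(1 / 3) * t ^ (3 : ℝ)) := by
    intro t _
    rw [rpow_one, expNegCube, show (3 : ℝ) = ((3 : ℕ) : ℝ) by norm_num, rpow_natCast]
    ring_nf
  rw [cubeTail, setIntegral_congr_fun measurableSet_Ioi hcongr,
    integral_rpow_mul_exp_neg_mul_rpow (by norm_num) (by norm_num) (by norm_num)]
  have hpow : ((1 : ℝ) / 3) ^ (-(1 + 1) / 3 : ℝ) * (1 / 3) = (3 : ℝ) ^ (-(1 / 3) : ℝ) := by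
    rw [one_div, inv_rpow (by norm_num), ← rpow_neg (by norm_num),
      ← rpow_neg_one 3, ← rpow_add (by norm_num)]
    norm_num
  rw [hpow]
  norm_num

noncomputable def scaledTail (x : ℝ) : ℝ := exp (x ^ 3 / 3) * cubeTail x

theorem hasDerivAt_scaledTail (x : ℝ) :
    HasDerivAt scaledTail (x ^ 2 * scaledTail x - x) x := by
  have hexp : HasDerivAt (fun u : ℝ => exp (u ^ 3 / 3)) (exp (x ^ 3 / 3) * x ^ 2) x := by
    convert ((hasDerivAt_pow 3 x).div_const 3).exp using 1
    push_cast
    ring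
  refine (hexp.mul (hasDerivAt_cubeTail x)).congr_deriv ?_
  rw [scaledTail]
  linear_combination (-x) * exp_mul_expNegCube x

theorem contDiff_scaledTail : ContDiff ℝ ∞ scaledTail :=
  contDiff_infty_of_hasDerivAt hasDerivAt_scaledTail fun _ h =>
    ((contDiff_id.pow 2).mul h).sub contDiff_id

theorem hasDerivAt_cubeTail_sub_mul {p : ℝ → ℝ} {p' x : ℝ} (hp : HasDerivAt p p' x) :
    HasDerivAt (fun u => cubeTail u - expNegCube u * p u)
      (expNegCube x * (x ^ 2 * p x - x - p')) x :=
  ((hasDerivAt_cubeTail x).sub ((hasDerivAt_expNegCube x).mul hp)).congr_deriv (by ring)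

theorem tendsto_cubeTail_sub_mul {p : ℝ → ℝ} {c : ℝ} (hp : Tendsto p atTop (𝓝 c)) :
    Tendsto (fun u => cubeTail u - expNegCube u * p u) atTop (𝓝 0) := by
  simpa [cubeTail] using
    (tendsto_integral_Ioi_zero tendsto_id).sub (tendsto_expNegCube_atTop.mul hp)

theorem le_scaledTail_of_le_deriv {p p' : ℝ → ℝ} {a c : ℝ}
    (hp : ∀ x ∈ Ici a, HasDerivAt p (p' x) x) (hle : ∀ x ∈ Ici a, x ^ 2 * p x - x ≤ p' x)
    (hlim : Tendsto p atTop (𝓝 c)) : p a ≤ scaledTail a := by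
  have h := nonneg_of_hasDerivAt_nonpos_of_tendsto_zero
    (fun x hx => hasDerivAt_cubeTail_sub_mul (hp x hx))
    (fun x hx => mul_nonpos_of_nonneg_of_nonpos (expNegCube_pos x).le (by linarith [hle x hx]))
    (tendsto_cubeTail_sub_mul hlim)
  calc p a = exp (a ^ 3 / 3) * (expNegCube a * p a) := by
        rw [← mul_assoc, exp_mul_expNegCube, one_mul]
    _ ≤ scaledTail a := mul_le_mul_of_nonneg_left (by linarith) (exp_pos _).le

theorem scaledTail_le_of_deriv_le {p p' : ℝ → ℝ} {a c : ℝ}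
    (hp : ∀ x ∈ Ici a, HasDerivAt p (p' x) x) (hle : ∀ x ∈ Ici a, p' x ≤ x ^ 2 * p x - x)
    (hlim : Tendsto p atTop (𝓝 c)) : scaledTail a ≤ p a := by
  have h := nonneg_of_hasDerivAt_nonpos_of_tendsto_zero
    (φ := fun u => -(cubeTail u - expNegCube u * p u))
    (fun x hx => (hasDerivAt_cubeTail_sub_mul (hp x hx)).neg)
    (fun x hx => neg_nonpos.2 (mul_nonneg (expNegCube_pos x).le (by linarith [hle x hx])))
    (by simpa only [neg_zero] using (tendsto_cubeTail_sub_mul hlim).neg)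
  beta_reduce at h
  calc scaledTail a ≤ exp (a ^ 3 / 3) * (expNegCube a * p a) :=
        mul_le_mul_of_nonneg_left (by linarith) (exp_pos _).le
    _ = p a := by rw [← mul_assoc, exp_mul_expNegCube, one_mul]

noncomputable def defect (x : ℝ) : ℝ := x * scaledTail x - 1

theorem hasDerivAt_defect (x : ℝ) :
    HasDerivAt defect (scaledTail x + x * (x ^ 2 * scaledTail x - x)) x :=
  (((hasDerivAt_id x).mul (hasDerivAt_scaledTail x)).sub_const 1).congr_deriv (by simp)

theorem le_defect {x : ℝ} (hx : 0 < x) : -1 / x ^ 3 ≤ defect x := by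
  have hR := le_scaledTail_of_le_deriv (p := fun u => 1 / u ^ 1 - 1 / u ^ 4) (a := x)
    (fun u hu => (hasDerivAt_const_div_pow 1 1 (hx.trans_le hu).ne').sub
      (hasDerivAt_const_div_pow 1 4 (hx.trans_le hu).ne'))
    (fun u hu => by
      have hu : 0 < u := hx.trans_le hu
      push_cast
      rw [← sub_nonneg]
      field_simp
      ring_nf
      positivity)
    ((tendsto_const_div_pow_atTop 1 one_ne_zero).sub (tendsto_const_div_pow_atTop 1 four_ne_zero))
  have hx3 : x * (1 / x ^ 1 - 1 / x ^ 4) - 1 = -1 / x ^ 3 := by field_simp; ring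
  rw [defect, ← hx3]
  nlinarith [hR]

theorem defect_le {x : ℝ} (hx : 0 < x) : defect x ≤ -1 / x ^ 3 + 4 / x ^ 6 := by
  have hR := scaledTail_le_of_deriv_le (p := fun u => 1 / u ^ 1 - 1 / u ^ 4 + 4 / u ^ 7) (a := x)
    (fun u hu => ((hasDerivAt_const_div_pow 1 1 (hx.trans_le hu).ne').sub
      (hasDerivAt_const_div_pow 1 4 (hx.trans_le hu).ne')).add
      (hasDerivAt_const_div_pow 4 7 (hx.trans_le hu).ne'))
    (fun u hu => by
      have hu : 0 < u := hx.trans_le hu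
      push_cast
      rw [← sub_nonneg]
      field_simp
      ring_nf
      positivity)
    (((tendsto_const_div_pow_atTop 1 one_ne_zero).sub
      (tendsto_const_div_pow_atTop 1 four_ne_zero)).add
      (tendsto_const_div_pow_atTop 4 (by norm_num)))
  have hx6 : x * (1 / x ^ 1 - 1 / x ^ 4 + 4 / x ^ 7) - 1 = -1 / x ^ 3 + 4 / x ^ 6 := by
    field_simp; ring
  rw [defect, ← hx6]
  nlinarith [hR]

theorem contDiff_defect : ContDiff ℝ ∞ defect :=
  (contDiff_id.mul contDiff_scaledTail).sub contDiff_const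

theorem abs_defect_le {x : ℝ} (hx : 1 ≤ x) : |defect x| ≤ 3 / x ^ 3 := by
  have hx0 : 0 < x := by linarith
  have h63 : 4 / x ^ 6 ≤ 4 / x ^ 3 :=
    div_le_div_of_nonneg_left (by norm_num) (by positivity) (pow_le_pow_right₀ hx (by norm_num))
  have h1 := le_defect hx0
  have h2 := defect_le hx0
  have hpos : 0 < 1 / x ^ 3 := by positivity
  have e1 : -1 / x ^ 3 = -(1 / x ^ 3) := neg_div _ _
  have e3 : 3 / x ^ 3 = 3 * (1 / x ^ 3) := by ring
  have e4 : 4 / x ^ 3 = 4 * (1 / x ^ 3) := by ring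
  rw [abs_le]
  constructor <;> linarith

theorem integrableOn_defect (a : ℝ) : IntegrableOn defect (Ioi a) := by
  have hg : IntegrableOn (fun t : ℝ => 3 / t ^ 3) (Ioi 1) :=
    integrableOn_Ioi_deriv_of_nonneg' (g := fun u : ℝ => -(3 / 2) / u ^ 2)
      (fun x hx => (hasDerivAt_const_div_pow _ 2 (one_pos.trans_le hx).ne').congr_deriv
        (by norm_num))
      (fun x hx => div_nonneg zero_le_three (pow_nonneg (zero_le_one.trans_lt hx).le 3))
      (tendsto_const_div_pow_atTop _ two_ne_zero)
  exact integrableOn_Ioi_of_norm_le contDiff_defect.continuous hg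
    (fun t ht => abs_defect_le (le_of_lt ht)) a

noncomputable def defectTail (x : ℝ) : ℝ := ∫ t in Ioi x, defect t

theorem hasDerivAt_defectTail (x : ℝ) : HasDerivAt defectTail (-defect x) x :=
  hasDerivAt_integral_Ioi contDiff_defect.continuous integrableOn_defect x

theorem contDiff_defectTail : ContDiff ℝ ∞ defectTail :=
  contDiff_infty_of_hasDerivAt hasDerivAt_defectTail fun n _ =>
    contDiff_defect.neg.of_le (by exact_mod_cast le_top)

theorem tendsto_defectTail_atTop : Tendsto defectTail atTop (𝓝 0) :=
  tendsto_integral_Ioi_zero tendsto_id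

theorem le_defectTail {x : ℝ} (hx : 0 < x) : -1 / (2 * x ^ 2) ≤ defectTail x := by
  have h := nonneg_of_hasDerivAt_nonpos_of_tendsto_zero (a := x)
    (φ := fun u => defectTail u + (1 / 2) / u ^ 2)
    (fun u hu => (hasDerivAt_defectTail u).add
      (hasDerivAt_const_div_pow _ 2 (hx.trans_le hu).ne'))
    (fun u hu => by
      have hu : 0 < u := hx.trans_le hu
      have := le_defect hu
      ring_nf at this ⊢
      linarith)
    (by simpa using tendsto_defectTail_atTop.add (tendsto_const_div_pow_atTop (1 / 2) two_ne_zero))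
  have : -1 / (2 * x ^ 2) = -((1 / 2) / x ^ 2) := by ring
  linarith

theorem defectTail_le {x : ℝ} (hx : 0 < x) :
    defectTail x ≤ -1 / (2 * x ^ 2) + 4 / (5 * x ^ 5) := by
  have h := nonneg_of_hasDerivAt_nonpos_of_tendsto_zero (a := x)
    (φ := fun u => -(1 / 2) / u ^ 2 + (4 / 5) / u ^ 5 - defectTail u)
    (fun u hu => ((hasDerivAt_const_div_pow _ 2 (hx.trans_le hu).ne').add
      (hasDerivAt_const_div_pow _ 5 (hx.trans_le hu).ne')).sub (hasDerivAt_defectTail u))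
    (fun u hu => by
      have hu : 0 < u := hx.trans_le hu
      have := defect_le hu
      ring_nf at this ⊢
      linarith)
    (by simpa using ((tendsto_const_div_pow_atTop (-(1 / 2)) two_ne_zero).add
      (tendsto_const_div_pow_atTop (4 / 5) (by norm_num))).sub tendsto_defectTail_atTop)
  have : -1 / (2 * x ^ 2) + 4 / (5 * x ^ 5) = -(1 / 2) / x ^ 2 + (4 / 5) / x ^ 5 := by ring
  linarith

noncomputable def solution (x : ℝ) : ℝ := 2 * scaledTail x + 2 * x * defectTail x

theorem contDiff_solution : ContDiff ℝ ∞ solution :=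
  (contDiff_const.mul contDiff_scaledTail).add
    ((contDiff_const.mul contDiff_id).mul contDiff_defectTail)

theorem hasDerivAt_solution (x : ℝ) : HasDerivAt solution (2 * defectTail x) x := by
  refine (((hasDerivAt_scaledTail x).const_mul 2).add
    (((hasDerivAt_id x).const_mul 2).mul (hasDerivAt_defectTail x))).congr_deriv ?_
  simp only [defect, id]
  ring

theorem deriv_solution : deriv solution = fun x => 2 * defectTail x :=
  funext fun x => (hasDerivAt_solution x).deriv

theorem iteratedDeriv_two_solution : iteratedDeriv 2 solution = fun x => -(2 * defect x) := by
  rw [iteratedDeriv_succ, iteratedDeriv_one, deriv_solution]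
  exact funext fun x => ((hasDerivAt_defectTail x).const_mul 2).deriv.trans (by ring)

theorem iteratedDeriv_three_solution : iteratedDeriv 3 solution =
    fun x => -(2 * (scaledTail x + x * (x ^ 2 * scaledTail x - x))) := by
  rw [iteratedDeriv_succ, iteratedDeriv_two_solution]
  exact funext fun x => ((hasDerivAt_defect x).const_mul 2).neg.deriv

theorem solution_ode (x : ℝ) :
    iteratedDeriv 3 solution x - x ^ 2 * iteratedDeriv 2 solution x - x * deriv solution x
      + solution x = 0 := by
  rw [iteratedDeriv_three_solution, iteratedDeriv_two_solution, deriv_solution]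
  simp only [solution, defect]
  ring

theorem abs_mul_solution_sub_one_le {x : ℝ} (hx : 1 ≤ x) :
    |x * solution x - 1| ≤ 8 / x ^ 3 := by
  have hx0 : 0 < x := by linarith
  have hx2 : 0 < 2 * x ^ 2 := by positivity
  have hH₁ : -1 ≤ 2 * x ^ 2 * defectTail x :=
    calc (-1 : ℝ) = 2 * x ^ 2 * (-1 / (2 * x ^ 2)) := by field_simp
      _ ≤ _ := mul_le_mul_of_nonneg_left (le_defectTail hx0) hx2.le
  have hH₂ : 2 * x ^ 2 * defectTail x ≤ -1 + 8 / 5 * (1 / x ^ 3) :=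
    calc 2 * x ^ 2 * defectTail x ≤ 2 * x ^ 2 * (-1 / (2 * x ^ 2) + 4 / (5 * x ^ 5)) :=
          mul_le_mul_of_nonneg_left (defectTail_le hx0) hx2.le
      _ = _ := by field_simp; ring
  have hd := abs_le.1 (abs_defect_le hx)
  have hpos : 0 < 1 / x ^ 3 := by positivity
  have e3 : 3 / x ^ 3 = 3 * (1 / x ^ 3) := by ring
  have e8 : 8 / x ^ 3 = 8 * (1 / x ^ 3) := by ring
  have hsplit : x * solution x - 1 = 2 * defect x + 2 * x ^ 2 * defectTail x + 1 := by
    simp only [solution, defect]; ring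
  rw [hsplit, abs_le]
  constructor <;> linarith

theorem tendsto_mul_solution_atTop : Tendsto (fun x => x * solution x) atTop (𝓝 1) :=
  tendsto_sub_nhds_zero_iff.1 <| squeeze_zero_norm'
    ((eventually_ge_atTop 1).mono fun _ hx => abs_mul_solution_sub_one_le hx)
    (tendsto_const_div_pow_atTop 8 three_ne_zero)

theorem solution_zero : solution 0 = 2 * (3 : ℝ) ^ (-(1 / 3) : ℝ) * Gamma (2 / 3) := by
  simp only [solution, scaledTail, cubeTail_zero]
  norm_num
  ring

end SubdominantSolution

/-- There is a solution of `y''' − x²y'' − xy' + y = 0` on `ℝ` with `y(x) ~ x⁻¹` as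
`x → +∞` and `y(0) = 2·3^{−1/3}·Γ(2/3)`. -/
theorem exists_subdominant_solution_with_value_at_zero :
    ∃ y : ℝ → ℝ, ContDiff ℝ 3 y ∧
      (∀ x : ℝ,
        iteratedDeriv 3 y x - x ^ 2 * iteratedDeriv 2 y x - x * deriv y x + y x = 0) ∧
      Tendsto (fun x : ℝ => x * y x) atTop (nhds 1) ∧
      y 0 = 2 * (3 : ℝ) ^ (-(1 / 3) : ℝ) * Real.Gamma (2 / 3) :=
  ⟨SubdominantSolution.solution, contDiff_infty.1 SubdominantSolution.contDiff_solution 3,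
    SubdominantSolution.solution_ode, SubdominantSolution.tendsto_mul_solution_atTop,
    SubdominantSolution.solution_zero⟩
end
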